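/- arXiv:1511.04989 — 2 statements merged into one kernel-verified Lean document; each statement's English description precedes it below -/
import Mathlib

section
/- For type-B permutation tableaux, the number of extensions of a tableau B of size n−1 to a tableau of size n equals 2^{U_{n−1}(B)+1}, where U_{n−1}(B) is the number of unrestricted rows of B; consequently, |B_n| = Σ_{B ∈ B_{n−1}} 2^{U_{n−1}(B)+1}. -/
open scoped BigOperators
open Nat

/-- The `t`-th border edge (1-indexed, read from northeast to southwest) of a Ferrers
shape with `cols` columns (rows given by the Young diagram `D`, possibly together with
extra empty rows) is a south step.  The south step belonging to row `i` occurs at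
position `i + 1 + (cols - rowLen i)`. -/
def IsSouth (D : YoungDiagram) (cols t : ℕ) : Prop :=
  ∃ i, t = i + 1 + (cols - D.rowLen i)

/-- Corners of a Ferrers diagram: cells whose right and bottom edges are both border
edges. -/
noncomputable def cornerCount (D : YoungDiagram) : ℕ :=
  {c : ℕ × ℕ | c ∈ D ∧ (c.1 + 1, c.2) ∉ D ∧ (c.1, c.2 + 1) ∉ D}.ncard

/-- A permutation tableau of size `n`: a Ferrers diagram of half-perimeter `n`
(`rows` rows, possibly empty, with the nonempty rows forming the Young diagram
`shape`) filled with `0`s and `1`s (`filling c = true` means the cell `c` contains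
a `1`), such that every column contains at least one `1` and no `0` has a `1` above
it in its column and simultaneously a `1` to its left in its row. -/
structure PermTableau (n : ℕ) where
  shape : YoungDiagram
  rows : ℕ
  rows_pos : 0 < rows
  rows_ge : shape.colLen 0 ≤ rows
  half : rows + shape.rowLen 0 = n
  filling : ℕ × ℕ → Bool
  support : ∀ c : ℕ × ℕ, c ∉ shape → filling c = false
  col_one : ∀ j < shape.rowLen 0, ∃ i, filling (i, j) = true
  avoid : ∀ i j : ℕ, (i, j) ∈ shape → filling (i, j) = false →
      (∃ i' < i, filling (i', j) = true) → ∀ j' < j, filling (i, j') = false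

/-- The `t`-th border edge of a permutation tableau is a south step. -/
def PermTableau.south {n : ℕ} (T : PermTableau n) (t : ℕ) : Prop :=
  IsSouth T.shape (T.shape.rowLen 0) t

/-- Row `i` of a permutation tableau is unrestricted: it contains no restricted `0`
(a `0` with a `1` above it in its column). -/
def PermTableau.unres {n : ℕ} (T : PermTableau n) (i : ℕ) : Prop :=
  ∀ j, (i, j) ∈ T.shape → T.filling (i, j) = false → ∀ i' < i, T.filling (i', j) = false

/-- The number of unrestricted rows of a permutation tableau. -/
noncomputable def PermTableau.U {n : ℕ} (T : PermTableau n) : ℕ :=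
  {i | i < T.rows ∧ T.unres i}.ncard

/-- A tree-like tableau of size `n`: a Ferrers diagram of half-perimeter `n + 1`
with pointed cells such that the top-left cell is pointed (the root point), every
row and every column contains a pointed cell, for every pointed cell all the cells
above it are empty or all the cells to its left are empty, and every non-root point
has a point above it or to its left (so that the points form a tree rooted at the
root point). -/
structure TreeLike (n : ℕ) where
  shape : YoungDiagram
  half : shape.colLen 0 + shape.rowLen 0 = n + 1
  point : ℕ × ℕ → Bool
  support : ∀ c : ℕ × ℕ, c ∉ shape → point c = false
  root : point (0, 0) = true
  row_point : ∀ i < shape.colLen 0, ∃ j, point (i, j) = true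
  col_point : ∀ j < shape.rowLen 0, ∃ i, point (i, j) = true
  cond : ∀ i j : ℕ, point (i, j) = true →
      (∀ i' < i, point (i', j) = false) ∨ (∀ j' < j, point (i, j') = false)
  conn : ∀ i j : ℕ, point (i, j) = true → (i, j) ≠ (0, 0) →
      (∃ i' < i, point (i', j) = true) ∨ (∃ j' < j, point (i, j') = true)

/-- The `t`-th border edge of a tree-like tableau is a south step (there are `n + 1`
border edges). -/
def TreeLike.south {n : ℕ} (T : TreeLike n) (t : ℕ) : Prop :=
  IsSouth T.shape (T.shape.rowLen 0) t

/-- A symmetric tree-like tableau of size `2 * n + 1`: a tree-like tableau invariant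
under reflection about the main diagonal. -/
structure SymTreeLike (n : ℕ) extends TreeLike (2 * n + 1) where
  sym_shape : toTreeLike.shape.transpose = toTreeLike.shape
  sym_point : ∀ i j : ℕ, toTreeLike.point (i, j) = toTreeLike.point (j, i)

/-- Cells of a shifted Ferrers diagram with `k` columns: on top a staircase of `k`
added rows, row `i` (for `i < k`) having the `i + 1` cells in columns `0, …, i`
with rightmost (diagonal) cell `(i, i)`, and below it the rows of the Ferrers
diagram `D` (row `k + i` of the shifted diagram is row `i` of `D`). -/
def BCell (k : ℕ) (D : YoungDiagram) (c : ℕ × ℕ) : Prop :=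
  (c.1 < k ∧ c.2 ≤ c.1) ∨ (k ≤ c.1 ∧ (c.1 - k, c.2) ∈ D)

/-- A type-B permutation tableau of size `n`: a shifted Ferrers diagram of
half-perimeter `n` (`cols` columns and `n - cols` lower rows, possibly empty, the
nonempty ones forming the Young diagram `shape`) filled with `0`s and `1`s such
that every column contains at least one `1`, no `0` has a `1` above it in its
column and simultaneously a `1` on its side in its row, and every row whose
diagonal cell contains a `0` is entirely filled with `0`s. -/
structure BTableau (n : ℕ) where
  cols : ℕ
  cols_le : cols ≤ n
  shape : YoungDiagram
  rows_ge : shape.colLen 0 ≤ n - cols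
  width_le : shape.rowLen 0 ≤ cols
  filling : ℕ × ℕ → Bool
  support : ∀ c : ℕ × ℕ, ¬ BCell cols shape c → filling c = false
  col_one : ∀ j < cols, ∃ i, filling (i, j) = true
  avoid : ∀ i j : ℕ, BCell cols shape (i, j) → filling (i, j) = false →
      (∃ i' < i, filling (i', j) = true) → ∀ j' < j, filling (i, j') = false
  diag : ∀ i < cols, filling (i, i) = false → ∀ j, filling (i, j) = false

/-- The `t`-th border edge of a type-B permutation tableau is a south step (there
are `n` border edges, those of the underlying, unshifted, Ferrers diagram). -/
def BTableau.south {n : ℕ} (B : BTableau n) (t : ℕ) : Prop :=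
  IsSouth B.shape B.cols t

/-- Row `i` (among the `n` rows of the shifted diagram) of a type-B permutation
tableau is unrestricted: it contains no restricted `0` and no diagonal `0`. -/
def BTableau.unres {n : ℕ} (B : BTableau n) (i : ℕ) : Prop :=
  (i < B.cols → B.filling (i, i) = true) ∧
  ∀ j, BCell B.cols B.shape (i, j) → B.filling (i, j) = false →
    ∀ i' < i, B.filling (i', j) = false

/-- The number of unrestricted rows of a type-B permutation tableau. -/
noncomputable def BTableau.U {n : ℕ} (B : BTableau n) : ℕ :=
  {i | i < n ∧ B.unres i}.ncard

/-- The number of corners of a type-B permutation tableau: occurrences of a south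
border step immediately followed by a west border step. -/
noncomputable def BTableau.corners {n : ℕ} (B : BTableau n) : ℕ :=
  {k | 1 ≤ k ∧ k + 1 ≤ n ∧ B.south k ∧ ¬ B.south (k + 1)}.ncard


/-!
The last border step of a type-B tableau of size `n` is either a south step, i.e. an empty
bottom row, or the west step of the first column; deleting the latter also deletes the top
row, which holds only the diagonal cell of that column. Conversely, a tableau `B` of size
`n - 1` acquires a new first column whose `1`s may sit in the new diagonal cell and in the
rows directly below the unrestricted rows of `B`: a `1` at the start of a row forbids both a
restricted `0` and a diagonal `0` further along that row. Every nonempty set of these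
`U(B) + 1` rows is allowed, and the empty set accounts for the extension by an empty row,
so `B` has `2 ^ (U(B) + 1)` extensions.
-/

theorem Nat.card_eq_finsum_card_fiber {α β : Type*} [Finite α] [Finite β] (f : α → β) :
    Nat.card α = ∑ᶠ b, Nat.card {a // f a = b} := by
  have := Fintype.ofFinite β
  rw [finsum_eq_sum_of_fintype, ← Nat.card_sigma, Nat.card_congr (Equiv.sigmaFiberEquiv f)]

namespace YoungDiagram

def dropFirstCol (μ : YoungDiagram) : YoungDiagram where
  cells := (μ.cells.filter (0 < ·.2)).image fun c => (c.1, c.2 - 1)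
  isLowerSet := by
    rintro ⟨i, j⟩ ⟨i', j'⟩ ⟨hi, hj⟩ hc
    simp only [Finset.coe_image, Finset.coe_filter, mem_cells, Set.mem_image,
      Set.mem_ofPred_eq, Prod.exists, Prod.mk.injEq] at hc ⊢
    obtain ⟨a, b, ⟨hab, hb⟩, rfl, rfl⟩ := hc
    dsimp only at hj
    exact ⟨i', j' + 1, ⟨μ.up_left_mem hi (by omega) hab, by omega⟩, rfl, rfl⟩

@[simp]
theorem mem_dropFirstCol {μ : YoungDiagram} {i j : ℕ} :
    (i, j) ∈ μ.dropFirstCol ↔ (i, j + 1) ∈ μ := by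
  rw [← mem_cells]
  simp only [dropFirstCol, Finset.mem_image, Finset.mem_filter, mem_cells, Prod.exists,
    Prod.mk.injEq]
  constructor
  · rintro ⟨a, b, ⟨hab, hb⟩, rfl, rfl⟩
    rwa [Nat.sub_add_cancel hb]
  · exact fun h => ⟨i, j + 1, ⟨h, j.succ_pos⟩, rfl, rfl⟩

theorem colLen_dropFirstCol (μ : YoungDiagram) : μ.dropFirstCol.colLen 0 = μ.colLen 1 :=
  eq_of_forall_lt_iff fun i => by
    rw [← mem_iff_lt_colLen, ← mem_iff_lt_colLen, mem_dropFirstCol]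

theorem rowLen_dropFirstCol (μ : YoungDiagram) (i : ℕ) :
    μ.dropFirstCol.rowLen i = μ.rowLen i - 1 :=
  eq_of_forall_lt_iff fun j => by
    rw [← mem_iff_lt_rowLen, mem_dropFirstCol, mem_iff_lt_rowLen]; omega

def consCol (μ : YoungDiagram) (m : ℕ) (h : μ.colLen 0 ≤ m) : YoungDiagram where
  cells := Finset.range m ×ˢ {0} ∪ μ.cells.image fun c => (c.1, c.2 + 1)
  isLowerSet := by
    rintro ⟨i, j⟩ ⟨i', j'⟩ ⟨hi, hj⟩ hc
    simp only [Finset.coe_union, Finset.coe_product, Finset.coe_range, Finset.coe_singleton,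
      Finset.coe_image, Set.mem_union, Set.mem_prod, Set.mem_Iio, Set.mem_singleton_iff,
      Set.mem_image, Finset.mem_coe, mem_cells, Prod.exists, Prod.mk.injEq] at hc hj ⊢
    rcases hc with ⟨hi', rfl⟩ | ⟨a, b, hab, rfl, rfl⟩
    · exact .inl ⟨by omega, by omega⟩
    · rcases j' with _ | j'
      · have := mem_iff_lt_colLen.1 (μ.up_left_mem hi b.zero_le hab)
        exact .inl ⟨by omega, rfl⟩
      · exact .inr ⟨i', j', μ.up_left_mem hi (by omega) hab, rfl, rfl⟩

@[simp]
theorem mem_consCol_zero {μ : YoungDiagram} {m : ℕ} {h : μ.colLen 0 ≤ m} {i : ℕ} :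
    (i, 0) ∈ μ.consCol m h ↔ i < m := by
  rw [← mem_cells]
  simp [consCol]

@[simp]
theorem mem_consCol_succ {μ : YoungDiagram} {m : ℕ} {h : μ.colLen 0 ≤ m} {i j : ℕ} :
    (i, j + 1) ∈ μ.consCol m h ↔ (i, j) ∈ μ := by
  rw [← mem_cells]
  simp [consCol]

theorem colLen_consCol {μ : YoungDiagram} {m : ℕ} (h : μ.colLen 0 ≤ m) :
    (μ.consCol m h).colLen 0 = m :=
  eq_of_forall_lt_iff fun i => by rw [← mem_iff_lt_colLen, mem_consCol_zero]

theorem rowLen_consCol_le {μ : YoungDiagram} {m : ℕ} (h : μ.colLen 0 ≤ m) (i : ℕ) :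
    (μ.consCol m h).rowLen i ≤ μ.rowLen i + 1 := by
  rw [← not_lt, ← mem_iff_lt_rowLen, mem_consCol_succ, mem_iff_lt_rowLen]
  exact lt_irrefl _

@[simp]
theorem dropFirstCol_consCol {μ : YoungDiagram} {m : ℕ} (h : μ.colLen 0 ≤ m) :
    (μ.consCol m h).dropFirstCol = μ :=
  SetLike.ext fun ⟨_, _⟩ => by simp

theorem consCol_dropFirstCol {μ : YoungDiagram} {m : ℕ} (h : μ.dropFirstCol.colLen 0 ≤ m)
    (hm : μ.colLen 0 = m) : μ.dropFirstCol.consCol m h = μ := by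
  refine SetLike.ext fun ⟨i, j⟩ => ?_
  rcases j with _ | j
  · rw [mem_consCol_zero, mem_iff_lt_colLen, hm]
  · rw [mem_consCol_succ, mem_dropFirstCol]

end YoungDiagram

namespace BCell

theorem dropFirstCol_iff {k : ℕ} (hk : 0 < k) {μ : YoungDiagram} {i j : ℕ} :
    BCell (k - 1) μ.dropFirstCol (i, j) ↔ BCell k μ (i + 1, j + 1) := by
  simp only [BCell, YoungDiagram.mem_dropFirstCol, show i + 1 - k = i - (k - 1) by omega]
  grind

theorem consCol_zero_iff {k m : ℕ} {μ : YoungDiagram} (h : μ.colLen 0 ≤ m) {i : ℕ} :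
    BCell (k + 1) (μ.consCol m h) (i, 0) ↔ i < k + 1 + m := by
  simp only [BCell, YoungDiagram.mem_consCol_zero]
  grind

theorem consCol_succ_succ_iff {k m : ℕ} {μ : YoungDiagram} (h : μ.colLen 0 ≤ m) {i j : ℕ} :
    BCell (k + 1) (μ.consCol m h) (i + 1, j + 1) ↔ BCell k μ (i, j) := by
  simp only [BCell, YoungDiagram.mem_consCol_succ, Nat.add_sub_add_right]
  grind

theorem not_consCol_zero_succ {k m : ℕ} {μ : YoungDiagram} (h : μ.colLen 0 ≤ m) (j : ℕ) :
    ¬ BCell (k + 1) (μ.consCol m h) (0, j + 1) := by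
  rintro (⟨-, h⟩ | ⟨h, -⟩) <;> omega

end BCell

namespace BTableau

variable {n m : ℕ}

@[ext]
theorem ext {B C : BTableau n} (hcols : B.cols = C.cols) (hshape : B.shape = C.shape)
    (hfilling : B.filling = C.filling) : B = C := by
  cases B; cases C; subst hcols hshape hfilling; rfl

theorem lt_of_bcell (B : BTableau n) {i j : ℕ} (h : BCell B.cols B.shape (i, j)) : i < n := by
  have := B.cols_le
  rcases h with ⟨hi, -⟩ | ⟨hi, hmem⟩
  · omega
  · have := YoungDiagram.mem_iff_lt_colLen.1 (B.shape.up_left_mem le_rfl j.zero_le hmem)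
    have := B.rows_ge
    omega

theorem lt_of_filling_eq_true (B : BTableau n) {i j : ℕ} (h : B.filling (i, j) = true) : i < n :=
  B.lt_of_bcell (j := j) (by_contra fun hc => by simp [B.support _ hc] at h)

theorem filling_zero_succ (B : BTableau n) (hcols : 0 < B.cols) (j : ℕ) :
    B.filling (0, j + 1) = false :=
  B.support _ (by rintro (⟨-, h⟩ | ⟨h, -⟩) <;> omega)

/-- The last border step is a south step: the bottom one of the `n - cols` lower rows is empty. -/
abbrev LastRowEmpty (T : BTableau n) : Prop :=
  T.shape.colLen 0 + T.cols < n

theorem cols_pos_of_not_lastRowEmpty {T : BTableau (m + 1)} (h : ¬ T.LastRowEmpty) :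
    0 < T.cols := by
  by_contra h0
  have hwidth : T.shape.rowLen 0 = 0 := by have := T.width_le; omega
  have hcorner : (0, 0) ∉ T.shape := fun h00 => by
    have := YoungDiagram.mem_iff_lt_rowLen.1 h00
    omega
  rw [YoungDiagram.mem_iff_lt_colLen] at hcorner
  omega

def dropLastRow (T : BTableau (m + 1)) (h : T.LastRowEmpty) : BTableau m where
  cols := T.cols
  cols_le := by omega
  shape := T.shape
  rows_ge := by omega
  width_le := T.width_le
  filling := T.filling
  support := T.support
  col_one := T.col_one
  avoid := T.avoid
  diag := T.diag

def dropFirstCol (T : BTableau (m + 1)) (h : ¬ T.LastRowEmpty) : BTableau m where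
  cols := T.cols - 1
  cols_le := by have := T.cols_le; omega
  shape := T.shape.dropFirstCol
  rows_ge := by
    have := T.shape.colLen_anti 0 1 zero_le_one
    have := T.rows_ge
    have := cols_pos_of_not_lastRowEmpty h
    rw [YoungDiagram.colLen_dropFirstCol]
    omega
  width_le := by
    have := T.width_le
    rw [YoungDiagram.rowLen_dropFirstCol]
    omega
  filling c := T.filling (c.1 + 1, c.2 + 1)
  support c hc :=
    T.support _ fun hT => hc ((BCell.dropFirstCol_iff (cols_pos_of_not_lastRowEmpty h)).2 hT)
  col_one j hj := by
    obtain ⟨_ | i, hi⟩ := T.col_one (j + 1) (by omega)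
    · simp [T.filling_zero_succ (cols_pos_of_not_lastRowEmpty h)] at hi
    · exact ⟨i, hi⟩
  avoid i j hc hf := by
    rintro ⟨i', hi', hone⟩ j' hj'
    exact T.avoid (i + 1) (j + 1)
      ((BCell.dropFirstCol_iff (cols_pos_of_not_lastRowEmpty h)).1 hc) hf
      ⟨i' + 1, by omega, hone⟩ (j' + 1) (by omega)
  diag i hi hf j := T.diag (i + 1) (by omega) hf (j + 1)

def reduce (T : BTableau (m + 1)) : BTableau m :=
  if h : T.LastRowEmpty then T.dropLastRow h else T.dropFirstCol h

theorem reduce_of_lastRowEmpty {T : BTableau (m + 1)} (h : T.LastRowEmpty) :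
    T.reduce = T.dropLastRow h :=
  dif_pos h

theorem reduce_of_not_lastRowEmpty {T : BTableau (m + 1)} (h : ¬ T.LastRowEmpty) :
    T.reduce = T.dropFirstCol h :=
  dif_neg h

open Classical in
noncomputable def unresRows (B : BTableau n) : Finset ℕ :=
  (Finset.range n).filter B.unres

theorem mem_unresRows {B : BTableau n} {i : ℕ} : i ∈ B.unresRows ↔ i < n ∧ B.unres i := by
  simp [unresRows]

theorem card_unresRows (B : BTableau n) : B.unresRows.card = B.U := by
  rw [U, ← Set.ncard_coe_finset]
  congr 1
  ext i
  simp [mem_unresRows]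

noncomputable def newColRows (B : BTableau n) : Finset ℕ :=
  insert 0 (B.unresRows.map ⟨(· + 1), add_left_injective 1⟩)

theorem succ_mem_newColRows {B : BTableau n} {i : ℕ} :
    i + 1 ∈ B.newColRows ↔ i < n ∧ B.unres i := by
  simp [newColRows, mem_unresRows]

theorem lt_of_mem_newColRows {B : BTableau n} {i : ℕ} (h : i ∈ B.newColRows) : i < n + 1 := by
  rcases i with _ | i
  · exact n.succ_pos
  · exact Nat.succ_lt_succ (succ_mem_newColRows.1 h).1

theorem card_newColRows (B : BTableau n) : B.newColRows.card = B.U + 1 := by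
  rw [newColRows, Finset.card_insert_of_notMem (by simp), Finset.card_map, card_unresRows]

def addEmptyRow (B : BTableau m) : BTableau (m + 1) where
  cols := B.cols
  cols_le := by have := B.cols_le; omega
  shape := B.shape
  rows_ge := by have := B.rows_ge; have := B.cols_le; omega
  width_le := B.width_le
  filling := B.filling
  support := B.support
  col_one := B.col_one
  avoid := B.avoid
  diag := B.diag

def colFilling (B : BTableau m) (s : Finset ℕ) : ℕ × ℕ → Bool
  | (i, 0) => decide (i ∈ s)
  | (0, _ + 1) => false
  | (i + 1, j + 1) => B.filling (i, j)

theorem colFilling_avoid (B : BTableau m) {s : Finset ℕ} (hs : s ⊆ B.newColRows) {i j : ℕ}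
    (hc : BCell (B.cols + 1) (B.shape.consCol (m - B.cols) B.rows_ge) (i, j))
    (hf : B.colFilling s (i, j) = false) (hone : ∃ i' < i, B.colFilling s (i', j) = true) :
    ∀ j' < j, B.colFilling s (i, j') = false := by
  obtain ⟨i', hi', hone⟩ := hone
  rcases j with _ | j
  · simp
  rcases i with _ | i
  · exact absurd hc (BCell.not_consCol_zero_succ _ j)
  rcases i' with _ | i'
  · simp [colFilling] at hone
  have hc := (BCell.consCol_succ_succ_iff _).1 hc
  have hrow := B.avoid i j hc hf ⟨i', by omega, hone⟩
  rintro (_ | j') hj'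
  · by_contra hnew
    have hunres := (succ_mem_newColRows.1 (hs (by simpa [colFilling] using hnew))).2
    simp [colFilling, hunres.2 j hc hf i' (by omega)] at hone
  · exact hrow j' (by omega)

theorem colFilling_diag (B : BTableau m) {s : Finset ℕ} (hs : s ⊆ B.newColRows) {i : ℕ}
    (hi : i < B.cols + 1) (hf : B.colFilling s (i, i) = false) (j : ℕ) :
    B.colFilling s (i, j) = false := by
  rcases i with _ | i <;> rcases j with _ | j
  · exact hf
  · rfl
  · by_contra hnew
    have hunres := (succ_mem_newColRows.1 (hs (by simpa [colFilling] using hnew))).2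
    simp [colFilling, hunres.1 (by omega)] at hf
  · exact B.diag i (by omega) hf j

def addFirstCol (B : BTableau m) (s : Finset ℕ) (hs : s ⊆ B.newColRows) (hne : s.Nonempty) :
    BTableau (m + 1) where
  cols := B.cols + 1
  cols_le := by have := B.cols_le; omega
  shape := B.shape.consCol (m - B.cols) B.rows_ge
  rows_ge := by rw [YoungDiagram.colLen_consCol]; omega
  width_le := by
    have := YoungDiagram.rowLen_consCol_le B.rows_ge 0
    have := B.width_le
    omega
  filling := B.colFilling s
  support := by
    rintro ⟨i, _ | j⟩ hc
    · have := B.cols_le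
      rw [BCell.consCol_zero_iff] at hc
      simpa [colFilling] using fun hi => hc (by have := lt_of_mem_newColRows (hs hi); omega)
    · rcases i with _ | i
      · rfl
      · exact B.support _ fun h => hc ((BCell.consCol_succ_succ_iff _).2 h)
  col_one := by
    rintro (_ | j) hj
    · obtain ⟨i, hi⟩ := hne
      exact ⟨i, by simpa [colFilling] using hi⟩
    · obtain ⟨i, hi⟩ := B.col_one j (by omega)
      exact ⟨i + 1, hi⟩
  avoid _ _ := B.colFilling_avoid hs
  diag _ hi := B.colFilling_diag hs hi

theorem reduce_addEmptyRow (B : BTableau m) : B.addEmptyRow.reduce = B := by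
  have h : B.addEmptyRow.LastRowEmpty := by
    have := B.rows_ge; have := B.cols_le
    simp only [LastRowEmpty, addEmptyRow]
    omega
  rw [reduce_of_lastRowEmpty h]
  rfl

theorem reduce_addFirstCol (B : BTableau m) {s : Finset ℕ} (hs : s ⊆ B.newColRows)
    (hne : s.Nonempty) : (B.addFirstCol s hs hne).reduce = B := by
  have h : ¬ (B.addFirstCol s hs hne).LastRowEmpty := by
    have := B.cols_le
    simp only [LastRowEmpty, addFirstCol, YoungDiagram.colLen_consCol]
    omega
  rw [reduce_of_not_lastRowEmpty h]
  ext1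
  · exact B.cols.add_sub_cancel 1
  · exact YoungDiagram.dropFirstCol_consCol B.rows_ge
  · rfl

theorem addEmptyRow_dropLastRow {T : BTableau (m + 1)} (h : T.LastRowEmpty) :
    (T.dropLastRow h).addEmptyRow = T :=
  rfl

def firstColRows (T : BTableau (m + 1)) : Finset ℕ :=
  (Finset.range (m + 1)).filter fun i => T.filling (i, 0)

theorem mem_firstColRows {T : BTableau (m + 1)} {i : ℕ} :
    i ∈ T.firstColRows ↔ T.filling (i, 0) = true := by
  simpa [firstColRows] using T.lt_of_filling_eq_true

theorem firstColRows_nonempty {T : BTableau (m + 1)} (h : ¬ T.LastRowEmpty) :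
    T.firstColRows.Nonempty := by
  obtain ⟨i, hi⟩ := T.col_one 0 (cols_pos_of_not_lastRowEmpty h)
  exact ⟨i, mem_firstColRows.2 hi⟩

theorem unres_dropFirstCol {T : BTableau (m + 1)} (h : ¬ T.LastRowEmpty) {i : ℕ}
    (hone : T.filling (i + 1, 0) = true) : (T.dropFirstCol h).unres i := by
  refine ⟨fun hi => ?_, fun j hc hf i' hi' => ?_⟩
  · by_contra hdiag
    have hrow := T.diag (i + 1) (Nat.add_lt_of_lt_sub hi) (by simpa [dropFirstCol] using hdiag)
    simp [hrow 0] at hone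
  · by_contra habove
    have hc := (BCell.dropFirstCol_iff (cols_pos_of_not_lastRowEmpty h)).1 hc
    have hrow := T.avoid (i + 1) (j + 1) hc hf
      ⟨i' + 1, by omega, by simpa [dropFirstCol] using habove⟩
    simp [hrow 0 j.succ_pos] at hone

theorem firstColRows_subset {T : BTableau (m + 1)} (h : ¬ T.LastRowEmpty) :
    T.firstColRows ⊆ (T.dropFirstCol h).newColRows := by
  rintro (_ | i) hi
  · simp [newColRows]
  · rw [mem_firstColRows] at hi
    have := T.lt_of_filling_eq_true hi
    exact succ_mem_newColRows.2 ⟨by omega, unres_dropFirstCol h hi⟩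

theorem addFirstCol_dropFirstCol {T : BTableau (m + 1)} (h : ¬ T.LastRowEmpty) :
    (T.dropFirstCol h).addFirstCol T.firstColRows (firstColRows_subset h)
      (firstColRows_nonempty h) = T := by
  have hcols := cols_pos_of_not_lastRowEmpty h
  ext1
  · exact Nat.sub_add_cancel hcols
  · refine YoungDiagram.consCol_dropFirstCol (T.dropFirstCol h).rows_ge ?_
    have := T.rows_ge
    simp only [dropFirstCol]
    omega
  · funext ⟨i, j⟩
    rcases j with _ | j
    · simp [addFirstCol, colFilling, mem_firstColRows]
    rcases i with _ | i
    · exact (T.filling_zero_succ hcols j).symm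
    · rfl

noncomputable def extend (B : BTableau m) (s : Finset ℕ) (hs : s ⊆ B.newColRows) :
    BTableau (m + 1) :=
  if hne : s.Nonempty then B.addFirstCol s hs hne else B.addEmptyRow

theorem reduce_extend (B : BTableau m) {s : Finset ℕ} (hs : s ⊆ B.newColRows) :
    (B.extend s hs).reduce = B := by
  unfold extend
  split_ifs with hne
  · exact B.reduce_addFirstCol hs hne
  · exact B.reduce_addEmptyRow

theorem extend_injective (B : BTableau m) {s t : Finset ℕ} (hs : s ⊆ B.newColRows)
    (ht : t ⊆ B.newColRows) (h : B.extend s hs = B.extend t ht) : s = t := by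
  unfold extend at h
  split_ifs at h with hs' ht' ht'
  · ext i
    simpa [addFirstCol, colFilling] using congrFun (congrArg filling h) (i, 0)
  · simpa [addFirstCol, addEmptyRow] using congrArg cols h
  · simpa [addFirstCol, addEmptyRow] using congrArg cols h
  · rw [Finset.not_nonempty_iff_eq_empty.1 hs', Finset.not_nonempty_iff_eq_empty.1 ht']

theorem exists_extend_reduce_eq (T : BTableau (m + 1)) :
    ∃ s, ∃ hs : s ⊆ T.reduce.newColRows, T.reduce.extend s hs = T := by
  by_cases h : T.LastRowEmpty
  · rw [reduce_of_lastRowEmpty h]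
    exact ⟨∅, Finset.empty_subset _, by simp [extend, addEmptyRow_dropLastRow]⟩
  · rw [reduce_of_not_lastRowEmpty h]
    exact ⟨_, firstColRows_subset h, by
      simp [extend, firstColRows_nonempty h, addFirstCol_dropFirstCol]⟩

theorem card_fiber_reduce (B : BTableau m) :
    Nat.card {T : BTableau (m + 1) // T.reduce = B} = 2 ^ (B.U + 1) := by
  let f : B.newColRows.powerset → {T : BTableau (m + 1) // T.reduce = B} := fun s =>
    ⟨B.extend s (Finset.mem_powerset.1 s.2), B.reduce_extend _⟩
  have hf : f.Bijective := by
    refine ⟨fun s t hst => Subtype.ext (B.extend_injective _ _ (congrArg Subtype.val hst)), ?_⟩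
    rintro ⟨T, rfl⟩
    obtain ⟨s, hs, hT⟩ := T.exists_extend_reduce_eq
    exact ⟨⟨s, Finset.mem_powerset.2 hs⟩, Subtype.ext hT⟩
  rw [← Nat.card_eq_of_bijective f hf, Nat.card_eq_finsetCard, Finset.card_powerset,
    card_newColRows]

instance : Subsingleton (BTableau 0) where
  allEq B C := by
    have hshape (D : BTableau 0) : D.shape = ⊥ := SetLike.ext fun ⟨i, j⟩ => by
      simp only [YoungDiagram.notMem_bot, iff_false]
      intro h
      have := YoungDiagram.mem_iff_lt_colLen.1 (D.shape.up_left_mem le_rfl j.zero_le h)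
      have := D.rows_ge
      omega
    have hfilling (D : BTableau 0) : D.filling = fun _ => false :=
      funext fun ⟨i, _⟩ => D.support _ fun h => absurd (D.lt_of_bcell h) i.not_lt_zero
    ext1
    · exact (Nat.le_zero.1 B.cols_le).trans (Nat.le_zero.1 C.cols_le).symm
    · rw [hshape B, hshape C]
    · rw [hfilling B, hfilling C]

instance (n : ℕ) : Finite (BTableau n) := by
  induction n with
  | zero => infer_instance
  | succ m ih =>
    have (B : BTableau m) : Finite {T : BTableau (m + 1) // T.reduce = B} :=
      Nat.finite_of_card_ne_zero (by rw [card_fiber_reduce]; positivity)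
    exact .of_equiv _ (Equiv.sigmaFiberEquiv reduce)

end BTableau

/-- For type-B permutation tableaux, the number of extensions of a tableau `B` of size
`n - 1` to a tableau of size `n` equals `2^{U_{n-1}(B) + 1}`; consequently
`|B_n| = Σ_{B ∈ B_{n-1}} 2^{U_{n-1}(B) + 1}`. -/
theorem extensions_BTableau (n : ℕ) (hn : 1 ≤ n) :
    ∃ red : BTableau n → BTableau (n - 1),
      (∀ B : BTableau (n - 1),
        Nat.card {T : BTableau n // red T = B} = 2 ^ (B.U + 1)) ∧
      Nat.card (BTableau n) = ∑ᶠ B : BTableau (n - 1), 2 ^ (B.U + 1) := by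
  obtain ⟨m, rfl⟩ : ∃ m, n = m + 1 := ⟨n - 1, by omega⟩
  refine ⟨BTableau.reduce, BTableau.card_fiber_reduce, ?_⟩
  rw [Nat.card_eq_finsum_card_fiber BTableau.reduce]
  exact finsum_congr BTableau.card_fiber_reduce
end

section
/- The number of permutation tableaux of size n whose last border edge (the n-th step of the southeast border) is a south step equals (n−1)!. -/
open scoped BigOperators
open Nat

/-!
Deleting the empty bottom row of a tableau whose last step is south is a bijection onto the
tableaux of size `n - 1`, so it remains to count all permutation tableaux. A tableau of size
`m + 1` either has an empty bottom row, whose removal adds one unrestricted row to a tableau of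
size `m`, or a first column of full height, whose `1`s lie in a nonempty set `S` of unrestricted
rows of the tableau of size `m` left after deleting it; the unrestricted rows of the result are
then `S` and the unrestricted rows above `min S`. Tracking the number `U` of unrestricted rows
gives `∑ x ^ U = x (x + 1) ⋯ (x + m - 1)`, and `x = 1` counts `m !` tableaux.
-/

open Finset

namespace YoungDiagram

lemma rowLen_eq_of_forall_mem_iff {μ : YoungDiagram} {i r : ℕ}
    (h : ∀ j, (i, j) ∈ μ ↔ j < r) : μ.rowLen i = r := by
  have h1 := (h (μ.rowLen i)).symm.trans mem_iff_lt_rowLen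
  have h2 := mem_iff_lt_rowLen.symm.trans (h r)
  omega

lemma colLen_eq_of_forall_mem_iff {μ : YoungDiagram} {j r : ℕ}
    (h : ∀ i, (i, j) ∈ μ ↔ i < r) : μ.colLen j = r := by
  have h1 := (h (μ.colLen j)).symm.trans mem_iff_lt_colLen
  have h2 := mem_iff_lt_colLen.symm.trans (h r)
  omega

@[simp]
lemma rowLen_bot (i : ℕ) : (⊥ : YoungDiagram).rowLen i = 0 :=
  rowLen_eq_of_forall_mem_iff fun _ => iff_of_false (notMem_bot _) (Nat.not_lt_zero _)

@[simp]
lemma colLen_bot (j : ℕ) : (⊥ : YoungDiagram).colLen j = 0 :=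
  colLen_eq_of_forall_mem_iff fun _ => iff_of_false (notMem_bot _) (Nat.not_lt_zero _)

lemma rowLen_eq_zero_iff {μ : YoungDiagram} {i : ℕ} : μ.rowLen i = 0 ↔ μ.colLen 0 ≤ i := by
  rw [← not_lt, ← mem_iff_lt_colLen, mem_iff_lt_rowLen]
  omega

noncomputable def dropFirstColumn (μ : YoungDiagram) : YoungDiagram where
  cells := μ.cells.preimage (Prod.map id (· + 1))
    (Prod.map_injective.2 ⟨Function.injective_id, add_left_injective 1⟩).injOn
  isLowerSet a b hab ha := by
    rw [mem_coe, mem_preimage, mem_cells] at ha ⊢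
    exact μ.up_left_mem hab.1 (Nat.add_le_add_right hab.2 1) ha

@[simp]
lemma mem_dropFirstColumn {μ : YoungDiagram} {i j : ℕ} :
    (i, j) ∈ μ.dropFirstColumn ↔ (i, j + 1) ∈ μ := by
  rw [← mem_cells, dropFirstColumn, mem_preimage, mem_cells, Prod.map_apply, id]

lemma rowLen_dropFirstColumn (μ : YoungDiagram) (i : ℕ) :
    μ.dropFirstColumn.rowLen i = μ.rowLen i - 1 :=
  rowLen_eq_of_forall_mem_iff fun j => by rw [mem_dropFirstColumn, mem_iff_lt_rowLen]; omega

lemma colLen_dropFirstColumn (μ : YoungDiagram) (j : ℕ) :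
    μ.dropFirstColumn.colLen j = μ.colLen (j + 1) :=
  colLen_eq_of_forall_mem_iff fun i => by rw [mem_dropFirstColumn, mem_iff_lt_colLen]

def addFirstColumn (μ : YoungDiagram) (R : ℕ) : YoungDiagram where
  cells := {c ∈ range R ×ˢ range (μ.rowLen 0 + 1) | c.2 = 0 ∨ (c.1, c.2 - 1) ∈ μ}
  isLowerSet := by
    rintro ⟨i₁, j₁⟩ ⟨i₂, j₂⟩ ⟨hi, hj⟩ h
    simp only [coe_filter, mem_product, mem_range, Set.mem_ofPred_eq] at h ⊢
    obtain ⟨⟨hi₁, hj₁⟩, h⟩ := h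
    refine ⟨⟨by omega, by omega⟩, ?_⟩
    rcases Nat.eq_zero_or_pos j₂ with hj₂ | hj₂
    · exact .inl hj₂
    · exact .inr (μ.up_left_mem hi (by omega) (h.resolve_left (by omega)))

lemma mem_addFirstColumn {μ : YoungDiagram} {R : ℕ} {i j : ℕ} :
    (i, j) ∈ μ.addFirstColumn R ↔ i < R ∧ (j = 0 ∨ (i, j - 1) ∈ μ) := by
  rw [← mem_cells, addFirstColumn, mem_filter, mem_product, mem_range, mem_range]
  constructor
  · exact fun ⟨⟨hi, _⟩, h⟩ => ⟨hi, h⟩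
  · rintro ⟨hi, h⟩
    refine ⟨⟨hi, ?_⟩, h⟩
    rcases h with rfl | h
    · omega
    · have := mem_iff_lt_rowLen.1 (μ.up_left_mem (Nat.zero_le i) le_rfl h)
      omega

lemma mem_addFirstColumn_succ {μ : YoungDiagram} {R i j : ℕ} :
    (i, j + 1) ∈ μ.addFirstColumn R ↔ i < R ∧ (i, j) ∈ μ := by
  rw [mem_addFirstColumn, Nat.add_sub_cancel, or_iff_right j.succ_ne_zero]

lemma rowLen_addFirstColumn {μ : YoungDiagram} {R i : ℕ}
    (hi : i < R) : (μ.addFirstColumn R).rowLen i = μ.rowLen i + 1 :=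
  rowLen_eq_of_forall_mem_iff fun j => by
    rw [mem_addFirstColumn, mem_iff_lt_rowLen]
    omega

lemma colLen_addFirstColumn (μ : YoungDiagram) (R : ℕ) :
    (μ.addFirstColumn R).colLen 0 = R :=
  colLen_eq_of_forall_mem_iff fun i => by simp [mem_addFirstColumn]

lemma dropFirstColumn_addFirstColumn {μ : YoungDiagram} {R : ℕ} (hR : μ.colLen 0 ≤ R) :
    (μ.addFirstColumn R).dropFirstColumn = μ := by
  ext ⟨i, j⟩
  rw [mem_cells, mem_cells, mem_dropFirstColumn, mem_addFirstColumn_succ, and_iff_right_iff_imp,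
    mem_iff_lt_colLen]
  exact fun h => (h.trans_le (μ.colLen_anti 0 j (Nat.zero_le j))).trans_le hR

lemma addFirstColumn_dropFirstColumn {μ : YoungDiagram} {R : ℕ} (h : μ.colLen 0 = R) :
    μ.dropFirstColumn.addFirstColumn R = μ := by
  ext ⟨i, j⟩
  rw [mem_cells, mem_cells, mem_addFirstColumn, mem_dropFirstColumn, mem_iff_lt_colLen,
    mem_iff_lt_colLen]
  rcases Nat.eq_zero_or_pos j with rfl | hj
  · simp [h]
  · have := μ.colLen_anti 0 j (Nat.zero_le j)
    rw [Nat.sub_add_cancel hj]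
    omega

end YoungDiagram

attribute [ext] PermTableau

namespace PermTableau

variable {m : ℕ}

lemma lt_of_mem_shape (T : PermTableau m) {i j : ℕ} (h : (i, j) ∈ T.shape) :
    i < T.rows ∧ j < T.shape.rowLen 0 :=
  ⟨(YoungDiagram.mem_iff_lt_colLen.1 (T.shape.up_left_mem le_rfl (Nat.zero_le j) h)).trans_le
      T.rows_ge,
    YoungDiagram.mem_iff_lt_rowLen.1 (T.shape.up_left_mem (Nat.zero_le i) le_rfl h)⟩

lemma rowLen_zero_pos (T : PermTableau m) (h : 0 < T.shape.colLen 0) : 0 < T.shape.rowLen 0 :=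
  Nat.pos_of_ne_zero fun h0 => by have := YoungDiagram.rowLen_eq_zero_iff.1 h0; omega

lemma mem_shape_of_filling (T : PermTableau m) {c : ℕ × ℕ} (h : T.filling c = true) :
    c ∈ T.shape := by
  by_contra hc
  simp [T.support c hc] at h

instance : Finite (PermTableau m) := by
  refine Finite.of_injective
    (β := Fin (m + 1) × (Fin m × Fin m → Prop) × (Fin m × Fin m → Bool))
    (fun T => (⟨T.rows, by have := T.half; omega⟩,
      fun c => (c.1.1, c.2.1) ∈ T.shape, fun c => T.filling (c.1, c.2))) ?_
  intro T₁ T₂ h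
  simp only [Prod.mk.injEq, Fin.mk.injEq] at h
  obtain ⟨hrows, hshape, hfilling⟩ := h
  have box (T : PermTableau m) {i j : ℕ} (h : (i, j) ∈ T.shape) : i < m ∧ j < m := by
    have := T.lt_of_mem_shape h; have := T.half; have := T.rows_pos; omega
  have hshape' : T₁.shape = T₂.shape := by
    ext ⟨i, j⟩
    simp only [YoungDiagram.mem_cells]
    by_cases hij : i < m ∧ j < m
    · exact iff_of_eq (congrFun hshape (⟨i, hij.1⟩, ⟨j, hij.2⟩))
    · exact iff_of_false (fun h => hij (box T₁ h)) (fun h => hij (box T₂ h))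
  refine PermTableau.ext hshape' hrows (funext fun ⟨i, j⟩ => ?_)
  by_cases hij : i < m ∧ j < m
  · exact congrFun hfilling (⟨i, hij.1⟩, ⟨j, hij.2⟩)
  · rw [T₁.support _ (fun h => hij (box T₁ h)), T₂.support _ (fun h => hij (box T₂ h))]

noncomputable instance : Fintype (PermTableau m) := Fintype.ofFinite _

open scoped Classical in
noncomputable def unresRows (T : PermTableau m) : Finset ℕ :=
  {i ∈ Finset.range T.rows | T.unres i}

@[simp]
lemma mem_unresRows {T : PermTableau m} {i : ℕ} :
    i ∈ T.unresRows ↔ i < T.rows ∧ T.unres i := by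
  simp [unresRows]

lemma U_eq_card_unresRows (T : PermTableau m) : T.U = T.unresRows.card := by
  rw [U, ← Set.ncard_coe_finset]
  congr
  ext i
  simp

/-- The south step of row `i` is step `i + 1 + (T.shape.rowLen 0 - T.shape.rowLen i)`, which is
the last step `m` only for an empty last row. -/
lemma south_iff_colLen_lt_rows (T : PermTableau m) :
    T.south m ↔ T.shape.colLen 0 < T.rows := by
  have := T.half
  have := T.rows_ge
  constructor
  · rintro ⟨i, hi⟩
    rcases Nat.eq_zero_or_pos (T.shape.rowLen i) with h0 | h0
    · have := YoungDiagram.rowLen_eq_zero_iff.1 h0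
      omega
    · have := YoungDiagram.mem_iff_lt_colLen.1 (YoungDiagram.mem_iff_lt_rowLen.2 h0)
      have := T.shape.rowLen_anti 0 i (Nat.zero_le i)
      omega
  · intro h
    refine ⟨T.rows - 1, ?_⟩
    rw [YoungDiagram.rowLen_eq_zero_iff.2 (show T.shape.colLen 0 ≤ T.rows - 1 by omega)]
    omega

def addRow (T : PermTableau m) : PermTableau (m + 1) where
  __ := T
  rows := T.rows + 1
  rows_pos := Nat.succ_pos _
  rows_ge := T.rows_ge.trans (Nat.le_succ _)
  half := by have := T.half; omega

def removeRow (T : PermTableau (m + 1)) (hm : 1 ≤ m) (h : T.shape.colLen 0 < T.rows) :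
    PermTableau m where
  __ := T
  rows := T.rows - 1
  rows_pos := by
    have := T.half
    have : T.shape.rowLen 0 = 0 ∨ 0 < T.shape.colLen 0 := by
      rw [YoungDiagram.rowLen_eq_zero_iff]; omega
    omega
  rows_ge := by omega
  half := by have := T.half; omega

noncomputable def addRowEquiv (hm : 1 ≤ m) :
    PermTableau m ≃ {T : PermTableau (m + 1) // T.shape.colLen 0 < T.rows} where
  toFun T := ⟨T.addRow, Nat.lt_succ_of_le T.rows_ge⟩
  invFun T := T.1.removeRow hm T.2
  left_inv _ := PermTableau.ext rfl (Nat.add_sub_cancel _ _) rfl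
  right_inv T := Subtype.ext (PermTableau.ext rfl (Nat.sub_add_cancel T.1.rows_pos) rfl)

lemma unres_of_rows_le (T : PermTableau m) {i : ℕ} (hi : T.rows ≤ i) : T.unres i :=
  fun _ hij => absurd hi (T.lt_of_mem_shape hij).1.not_ge

lemma U_addRow (T : PermTableau m) : T.addRow.U = T.U + 1 := by
  have hnew : T.rows ∉ T.unresRows := fun h => (mem_unresRows.1 h).1.false
  rw [U_eq_card_unresRows, U_eq_card_unresRows, ← card_insert_of_notMem hnew]
  congr 1
  ext i
  rw [mem_unresRows, mem_insert, mem_unresRows]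
  change i < T.rows + 1 ∧ T.unres i ↔ _
  constructor
  · rintro ⟨hi, hu⟩
    rcases Nat.lt_succ_iff_lt_or_eq.1 hi with hi | rfl
    exacts [.inr ⟨hi, hu⟩, .inl rfl]
  · rintro (rfl | ⟨hi, hu⟩)
    exacts [⟨Nat.lt_succ_self _, T.unres_of_rows_le le_rfl⟩, ⟨Nat.lt_succ_of_lt hi, hu⟩]

noncomputable def admissibleColumns (T : PermTableau m) : Finset (Finset ℕ) :=
  {S ∈ T.unresRows.powerset | S.Nonempty}

lemma mem_admissibleColumns {T : PermTableau m} {S : Finset ℕ} :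
    S ∈ T.admissibleColumns ↔ S ⊆ T.unresRows ∧ S.Nonempty := by
  rw [admissibleColumns, mem_filter, mem_powerset]

def addColumn (T : PermTableau m) (S : Finset ℕ) (hS : S ∈ T.admissibleColumns) :
    PermTableau (m + 1) where
  shape := T.shape.addFirstColumn T.rows
  rows := T.rows
  rows_pos := T.rows_pos
  rows_ge := (YoungDiagram.colLen_addFirstColumn _ _).le
  half := by
    rw [YoungDiagram.rowLen_addFirstColumn T.rows_pos, ← add_assoc, T.half]
  filling
    | (i, 0) => decide (i ∈ S)
    | (i, j + 1) => T.filling (i, j)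
  support := by
    rintro ⟨i, _ | j⟩ hij <;> rw [YoungDiagram.mem_addFirstColumn] at hij
    · have hS := mem_admissibleColumns.1 hS
      simpa using fun hi => hij ⟨(mem_unresRows.1 (hS.1 hi)).1, .inl rfl⟩
    · exact T.support _ fun h => hij ⟨(T.lt_of_mem_shape h).1, .inr h⟩
  col_one := by
    rintro (_ | j) hj
    · obtain ⟨i, hi⟩ := (mem_admissibleColumns.1 hS).2
      exact ⟨i, decide_eq_true hi⟩
    · rw [YoungDiagram.rowLen_addFirstColumn T.rows_pos] at hj
      exact T.col_one j (by omega)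
  avoid := by
    rintro i (_ | j) hij hzero ⟨i', hi', hone⟩ (_ | j') hj'
    · omega
    · omega
    · change T.filling (i, j) = false at hzero
      change T.filling (i', j) = true at hone
      have hij := (YoungDiagram.mem_addFirstColumn_succ.1 hij).2
      refine decide_eq_false fun hiS => ?_
      have := (mem_unresRows.1 ((mem_admissibleColumns.1 hS).1 hiS)).2 j hij hzero i' hi'
      simp [this] at hone
    · exact T.avoid i j (YoungDiagram.mem_addFirstColumn_succ.1 hij).2 hzero ⟨i', hi', hone⟩ j'
        (by omega)

noncomputable def removeColumn (T : PermTableau (m + 1)) (h : T.shape.colLen 0 = T.rows) :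
    PermTableau m where
  shape := T.shape.dropFirstColumn
  rows := T.rows
  rows_pos := T.rows_pos
  rows_ge := by
    rw [YoungDiagram.colLen_dropFirstColumn]
    exact (T.shape.colLen_anti 0 1 zero_le_one).trans T.rows_ge
  half := by
    have := T.rowLen_zero_pos (h ▸ T.rows_pos)
    have := T.half
    rw [YoungDiagram.rowLen_dropFirstColumn]
    omega
  filling c := T.filling (c.1, c.2 + 1)
  support c hc := T.support _ (YoungDiagram.mem_dropFirstColumn.not.1 hc)
  col_one j hj := by
    rw [YoungDiagram.rowLen_dropFirstColumn] at hj
    exact T.col_one (j + 1) (by omega)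
  avoid i j hij hzero hone j' hj' :=
    T.avoid i (j + 1) (YoungDiagram.mem_dropFirstColumn.1 hij) hzero hone (j' + 1) (by omega)

noncomputable def firstColumn (T : PermTableau (m + 1)) : Finset ℕ :=
  {i ∈ Finset.range T.rows | T.filling (i, 0) = true}

lemma mem_firstColumn {T : PermTableau (m + 1)} {i : ℕ} :
    i ∈ T.firstColumn ↔ T.filling (i, 0) = true := by
  rw [firstColumn, mem_filter, mem_range, and_iff_right_iff_imp]
  exact fun h => (T.lt_of_mem_shape (T.mem_shape_of_filling h)).1

/-- A row with a `1` in the first column is unrestricted: a `0` with a `1` above it would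
otherwise have a `1` to its left. -/
lemma firstColumn_mem_admissibleColumns (T : PermTableau (m + 1))
    (h : T.shape.colLen 0 = T.rows) : T.firstColumn ∈ (T.removeColumn h).admissibleColumns := by
  rw [mem_admissibleColumns]
  constructor
  · intro i hi
    have hi := mem_firstColumn.1 hi
    refine mem_unresRows.2 ⟨(T.lt_of_mem_shape (T.mem_shape_of_filling hi)).1, ?_⟩
    intro j hij hzero i' hi'
    by_contra hone
    have := T.avoid i (j + 1) (YoungDiagram.mem_dropFirstColumn.1 hij) hzero
      ⟨i', hi', Bool.not_eq_false _ ▸ hone⟩ 0 j.succ_pos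
    simp [this] at hi
  · obtain ⟨i, hi⟩ := T.col_one 0 (T.rowLen_zero_pos (h ▸ T.rows_pos))
    exact ⟨i, mem_firstColumn.2 hi⟩

noncomputable def addColumnEquiv :
    (Σ T : PermTableau m, T.admissibleColumns) ≃
      {T : PermTableau (m + 1) // T.shape.colLen 0 = T.rows} where
  toFun p := ⟨p.1.addColumn p.2 p.2.2, YoungDiagram.colLen_addFirstColumn _ _⟩
  invFun T := ⟨T.1.removeColumn T.2, T.1.firstColumn, T.1.firstColumn_mem_admissibleColumns T.2⟩
  left_inv := by
    rintro ⟨T, S, hS⟩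
    refine Sigma.subtype_ext (PermTableau.ext ?_ rfl rfl) ?_
    · exact YoungDiagram.dropFirstColumn_addFirstColumn T.rows_ge
    · ext i
      rw [mem_firstColumn]
      exact decide_eq_true_iff
  right_inv := by
    rintro ⟨T, h⟩
    refine Subtype.ext (PermTableau.ext (YoungDiagram.addFirstColumn_dropFirstColumn h) rfl ?_)
    funext c
    obtain ⟨i, _ | j⟩ := c
    · exact (Bool.decide_congr mem_firstColumn).trans Bool.decide_eq_true
    · rfl

lemma unres_addColumn {T : PermTableau m} {S : Finset ℕ} (hS : S ∈ T.admissibleColumns)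
    {i : ℕ} (hi : i < T.rows) :
    (T.addColumn S hS).unres i ↔ i ∈ S ∨ (T.unres i ∧ ∀ k ∈ S, i < k) := by
  have hS' := mem_admissibleColumns.1 hS
  constructor
  · intro hu
    by_cases hiS : i ∈ S
    · exact .inl hiS
    refine .inr ⟨fun j hij hzero i' hi' => ?_, fun k hk => ?_⟩
    · exact hu (j + 1) (YoungDiagram.mem_addFirstColumn_succ.2 ⟨hi, hij⟩) hzero i' hi'
    · have hik : i ≠ k := fun h => hiS (h ▸ hk)
      by_contra hki
      have := hu 0 (YoungDiagram.mem_addFirstColumn.2 ⟨hi, .inl rfl⟩) (decide_eq_false hiS) k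
        (by omega)
      exact (of_decide_eq_false this) hk
  · rintro h (_ | j) hij hzero i' hi'
    · have hiS : i ∉ S := of_decide_eq_false hzero
      exact decide_eq_false fun hi'S => by
        have := (h.resolve_left hiS).2 i' hi'S
        omega
    · have hu : T.unres i := h.elim (fun hiS => (mem_unresRows.1 (hS'.1 hiS)).2) And.left
      exact hu j (YoungDiagram.mem_addFirstColumn_succ.1 hij).2 hzero i' hi'

lemma unresRows_addColumn {T : PermTableau m} {S : Finset ℕ} (hS : S ∈ T.admissibleColumns) :
    (T.addColumn S hS).unresRows = S ∪ {i ∈ T.unresRows | ∀ k ∈ S, i < k} := by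
  have hS' := mem_admissibleColumns.1 hS
  ext i
  rw [mem_unresRows, mem_union, mem_filter, mem_unresRows]
  change i < T.rows ∧ _ ↔ _
  constructor
  · rintro ⟨hi, hu⟩
    rcases (unres_addColumn hS hi).1 hu with hiS | ⟨hu, hlt⟩
    exacts [.inl hiS, .inr ⟨⟨hi, hu⟩, hlt⟩]
  · rintro (hiS | ⟨⟨hi, hu⟩, hlt⟩)
    · have hi := (mem_unresRows.1 (hS'.1 hiS)).1
      exact ⟨hi, (unres_addColumn hS hi).2 (.inl hiS)⟩
    · exact ⟨hi, (unres_addColumn hS hi).2 (.inr ⟨hu, hlt⟩)⟩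

lemma U_addColumn {T : PermTableau m} {S : Finset ℕ} (hS : S ∈ T.admissibleColumns) :
    (T.addColumn S hS).U = S.card + {i ∈ T.unresRows | ∀ k ∈ S, i < k}.card := by
  rw [U_eq_card_unresRows, unresRows_addColumn, card_union_of_disjoint]
  exact disjoint_left.2 fun i hiS hi => (lt_irrefl i ((mem_filter.1 hi).2 i hiS))

end PermTableau

lemma sum_pow_card_eq_add_one_pow {R : Type*} [CommSemiring R] (x : R) (F : Finset ℕ) :
    ∑ S ∈ F.powerset, x ^ #S = (x + 1) ^ #F := by
  simpa using sum_pow_mul_eq_add_pow x 1 F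

/-- Splitting off the least element `a` of `insert a F`: a subset of `F` gains `a` below it,
and a subset containing `a` has nothing below it. -/
lemma sum_nonempty_pow_card_add_card_lt {R : Type*} [CommSemiring R] (x : R) (F : Finset ℕ) :
    ∑ S ∈ F.powerset with S.Nonempty, x ^ (#S + #{i ∈ F | ∀ k ∈ S, i < k}) +
      x ^ (#F + 1) = x * (x + 1) ^ #F := by
  induction F using Finset.induction_on_min with
  | empty => simp [filter_singleton]
  | insert a F hmin ih =>
    have ha : a ∉ F := fun h => lt_irrefl a (hmin a h)
    have hsub : ∀ S ∈ F.powerset, S.Nonempty →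
        x ^ (#S + #{i ∈ insert a F | ∀ k ∈ S, i < k}) =
          x * x ^ (#S + #{i ∈ F | ∀ k ∈ S, i < k}) := by
      intro S hS _
      rw [filter_insert, if_pos fun k hk => hmin k (mem_powerset.1 hS hk),
        card_insert_of_notMem fun h => ha (mem_filter.1 h).1, ← add_assoc, _root_.pow_succ']
    have hins : ∀ S ∈ F.powerset,
        x ^ (#(insert a S) + #{i ∈ insert a F | ∀ k ∈ insert a S, i < k}) = x * x ^ #S := by
      intro S hS
      have hbelow : {i ∈ insert a F | ∀ k ∈ insert a S, i < k} = ∅ :=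
        filter_eq_empty_iff.2 fun i hi hlt => by
          rcases mem_insert.1 hi with rfl | hi
          exacts [lt_irrefl i (hlt i (mem_insert_self i S)),
            lt_asymm (hmin i hi) (hlt a (mem_insert_self a S))]
      rw [hbelow, card_empty, add_zero, card_insert_of_notMem fun h => ha (mem_powerset.1 hS h),
        _root_.pow_succ']
    rw [sum_filter, sum_powerset_insert ha]
    simp only [insert_nonempty, if_true]
    rw [sum_congr rfl fun S hS => (ite_congr rfl (hsub S hS) fun _ => rfl),
      sum_congr rfl hins]
    rw [← sum_filter, ← mul_sum, ← mul_sum, sum_pow_card_eq_add_one_pow,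
      card_insert_of_notMem ha]
    calc _ = x * (∑ S ∈ F.powerset with S.Nonempty, x ^ (#S + #{i ∈ F | ∀ k ∈ S, i < k}) +
            x ^ (#F + 1)) + x * (x + 1) ^ #F := by ring
      _ = _ := by rw [ih]; ring

namespace PermTableau

variable {m : ℕ}

lemma rows_eq_one (T : PermTableau 1) : T.rows = 1 := by
  have := T.half; have := T.rows_pos; omega

lemma shape_eq_bot (T : PermTableau 1) : T.shape = ⊥ := by
  have := T.half
  have := T.rows_pos
  ext ⟨i, j⟩
  simp only [YoungDiagram.mem_cells, YoungDiagram.notMem_bot, iff_false]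
  exact fun h => by have := (T.lt_of_mem_shape h).2; omega

instance : Unique (PermTableau 1) where
  default :=
    { shape := ⊥
      rows := 1
      rows_pos := one_pos
      rows_ge := by rw [YoungDiagram.colLen_bot]; exact zero_le_one
      half := by rw [YoungDiagram.rowLen_bot]
      filling := fun _ => false
      support := fun _ _ => rfl
      col_one := fun j hj => absurd hj (by simp)
      avoid := fun _ _ _ _ _ _ _ => rfl }
  uniq T := PermTableau.ext T.shape_eq_bot T.rows_eq_one <| funext fun c =>
    T.support c (T.shape_eq_bot ▸ YoungDiagram.notMem_bot c)

lemma U_eq_one (T : PermTableau 1) : T.U = 1 := by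
  rw [U_eq_card_unresRows, card_eq_one]
  refine ⟨0, eq_singleton_iff_unique_mem.2 ⟨?_, fun i hi => ?_⟩⟩
  · exact mem_unresRows.2 ⟨T.rows_pos, fun _ _ _ _ h => absurd h (Nat.not_lt_zero _)⟩
  · have := (mem_unresRows.1 hi).1
    rw [rows_eq_one] at this
    omega

variable {R : Type*} [CommSemiring R]

lemma sum_pow_U_succ (hm : 1 ≤ m) (x : R) :
    ∑ T : PermTableau (m + 1), x ^ T.U = x * ∑ T : PermTableau m, (x + 1) ^ T.U := by
  classical
  let westEquiv : (Σ T : PermTableau m, T.admissibleColumns) ≃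
      {T : PermTableau (m + 1) // ¬ T.shape.colLen 0 < T.rows} :=
    addColumnEquiv.trans <| Equiv.subtypeEquivRight fun T => by
      rw [T.rows_ge.lt_iff_ne, not_not]
  rw [← Fintype.sum_subtype_add_sum_subtype (fun T : PermTableau (m + 1) =>
      T.shape.colLen 0 < T.rows), ← (addRowEquiv hm).sum_comp, ← westEquiv.sum_comp,
    Fintype.sum_sigma, ← sum_add_distrib, mul_sum]
  refine sum_congr rfl fun T _ => ?_
  change x ^ T.addRow.U + ∑ S : T.admissibleColumns, x ^ (T.addColumn S S.2).U = _
  simp_rw [U_addRow, U_addColumn]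
  rw [sum_coe_sort T.admissibleColumns
      fun S => x ^ (#S + #{i ∈ T.unresRows | ∀ k ∈ S, i < k}),
    admissibleColumns, U_eq_card_unresRows, ← sum_nonempty_pow_card_add_card_lt, add_comm]

theorem sum_pow_U (hm : 1 ≤ m) (x : R) :
    ∑ T : PermTableau m, x ^ T.U = ∏ k ∈ range m, (x + k) := by
  induction m, hm using Nat.le_induction generalizing x with
  | base => simp [U_eq_one]
  | succ m hm ih =>
    rw [sum_pow_U_succ hm, ih, prod_range_succ']
    simp only [Nat.cast_add, Nat.cast_one, Nat.cast_zero, add_zero]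
    rw [mul_comm]
    congr 1
    exact prod_congr rfl fun k _ => by ring

theorem card_eq_factorial (hm : 1 ≤ m) : Nat.card (PermTableau m) = m ! := by
  simpa [add_comm, prod_range_add_one_eq_factorial] using sum_pow_U hm (1 : ℕ)

end PermTableau

/-- The number of permutation tableaux of size `n` whose last border edge (the `n`-th
step of the southeast border) is a south step equals `(n - 1) !`. -/
theorem card_permTableau_last_south (n : ℕ) (hn : 1 ≤ n) :
    Nat.card {T : PermTableau n // T.south n} = (n - 1) ! := by
  rw [Nat.card_congr (Equiv.subtypeEquivRight fun T => T.south_iff_colLen_lt_rows)]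
  obtain ⟨m, rfl⟩ := Nat.exists_eq_add_of_le' hn
  rcases m.eq_zero_or_pos with rfl | hm
  -- `PermTableau 0` is empty (`rows_pos`), so size `1` is not covered by `addRowEquiv`.
  · have hlt (T : PermTableau 1) : T.shape.colLen 0 < T.rows := by
      rw [T.shape_eq_bot, T.rows_eq_one, YoungDiagram.colLen_bot]
      exact one_pos
    rw [Nat.card_congr (Equiv.subtypeUnivEquiv hlt), Nat.card_unique]
    rfl
  · rw [← Nat.card_congr (PermTableau.addRowEquiv hm), PermTableau.card_eq_factorial hm]
    rfl
end
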